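/- arXiv:1407.8535 — 4 statements merged into one kernel-verified Lean document; each statement's English description precedes it below -/
import Mathlib

section
/- For every loopless directed graph G without multiple arcs on vertex set [n], the expected in-degree of the winner of the permutation mechanism under a uniformly random permutation π of [n] is at least Δ⁻(G)/2; that is, (1/n!)·Σ_π d⁻(y_n(π)) ≥ Δ⁻(G)/2. -/
/- Directed graphs on vertex set `[n]` (modelled as `Fin (n+1)`, so the vertex set is
nonempty) are given by a Boolean arc relation `A`; looplessness is `∀ v, A v v = false`,
and absence of multiple arcs is automatic. -/

/-- The number of in-neighbors of `v` (w.r.t. the arc relation `A`) lying in the set `S`. -/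
def inNbrs {m : ℕ} (A : Fin m → Fin m → Bool) (S : Finset (Fin m)) (v : Fin m) : ℕ :=
  (S.filter fun u => A u v).card

/-- The in-degree `d⁻(v)` of a vertex `v`. -/
def inDeg {m : ℕ} (A : Fin m → Fin m → Bool) (v : Fin m) : ℕ :=
  inNbrs A Finset.univ v

/-- The maximum in-degree `Δ⁻(G)`. -/
def maxInDeg {m : ℕ} (A : Fin m → Fin m → Bool) : ℕ :=
  Finset.univ.sup (inDeg A)

/-- `Π_k`: the set of the first `k` vertices in the permutation `π`. -/
def firstK {m : ℕ} (π : Equiv.Perm (Fin m)) (k : ℕ) : Finset (Fin m) :=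
  Finset.univ.filter fun v => (π.symm v : ℕ) < k

/-- The provisional leader of the permutation mechanism after the vertices in
positions `0, 1, …, i` (0-indexed) have been examined.  `leader A π 0 = π 0` is `y₁`,
and the new vertex becomes leader when it has at least as many in-neighbors in
`Π_{i+1} ∖ {y}` as the current leader `y`. -/
def leader {n : ℕ} (A : Fin (n+1) → Fin (n+1) → Bool) (π : Equiv.Perm (Fin (n+1))) :
    ℕ → Fin (n+1)
  | 0 => π 0
  | i + 1 =>
      let y := leader A π i
      if h : i + 1 < n + 1 then
        let c := π ⟨i + 1, h⟩
        let S := (firstK π (i + 1)).erase y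
        if inNbrs A S y ≤ inNbrs A S c then c else y
      else y

/-- The winner `y_n` of the permutation mechanism. -/
def winner {n : ℕ} (A : Fin (n+1) → Fin (n+1) → Bool) (π : Equiv.Perm (Fin (n+1))) :
    Fin (n+1) :=
  leader A π n

section Aux

variable {n : ℕ} (A : Fin (n+1) → Fin (n+1) → Bool) (π : Equiv.Perm (Fin (n+1)))

lemma inNbrs_mono {m : ℕ} (B : Fin m → Fin m → Bool) {S T : Finset (Fin m)}
    (h : S ⊆ T) (v : Fin m) : inNbrs B S v ≤ inNbrs B T v :=
  Finset.card_le_card (Finset.filter_subset_filter _ h)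

lemma firstK_mono {m : ℕ} (σ : Equiv.Perm (Fin m)) {j k : ℕ} (h : j ≤ k) :
    firstK σ j ⊆ firstK σ k := by
  intro v hv
  simp only [firstK, Finset.mem_filter, Finset.mem_univ, true_and] at *
  omega

lemma mem_firstK {m : ℕ} (σ : Equiv.Perm (Fin m)) (k : ℕ) (v : Fin m) :
    v ∈ firstK σ k ↔ (σ.symm v : ℕ) < k := by
  simp [firstK]

lemma firstK_succ (k : ℕ) (h : k < n+1) :
    firstK π (k+1) = insert (π ⟨k, h⟩) (firstK π k) := by
  ext v
  simp only [mem_firstK, Finset.mem_insert]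
  constructor
  · intro hv
    rcases Nat.lt_succ_iff_lt_or_eq.mp hv with h' | h'
    · exact Or.inr h'
    · left
      have : π.symm v = ⟨k, h⟩ := Fin.ext h'
      rw [← this, Equiv.apply_symm_apply]
  · rintro (rfl | hv)
    · simp
    · omega

lemma self_not_mem_firstK (k : ℕ) (h : k < n+1) : π ⟨k, h⟩ ∉ firstK π k := by
  rw [mem_firstK]
  simp

/-- The score of the current leader: its in-neighbors among seen vertices other
than itself. -/
def score (i : ℕ) : ℕ :=
  inNbrs A ((firstK π (i+1)).erase (leader A π i)) (leader A π i)

lemma leader_succ (i : ℕ) :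
    leader A π (i+1) =
      if h : i + 1 < n + 1 then
        (if inNbrs A ((firstK π (i+1)).erase (leader A π i)) (leader A π i) ≤
            inNbrs A ((firstK π (i+1)).erase (leader A π i)) (π ⟨i + 1, h⟩)
          then π ⟨i + 1, h⟩ else leader A π i)
      else leader A π i := rfl

lemma score_mono_succ (i : ℕ) : score A π i ≤ score A π (i+1) := by
  by_cases h : i + 1 < n + 1
  · set y := leader A π i with hy
    set c := π ⟨i+1, h⟩ with hc
    set S := (firstK π (i+1)).erase y with hS
    have hl : leader A π (i+1) = if inNbrs A S y ≤ inNbrs A S c then c else y := by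
      rw [leader_succ, dif_pos h]
    by_cases hif : inNbrs A S y ≤ inNbrs A S c
    · have hkey : (firstK π (i+1+1)).erase c = firstK π (i+1) := by
        rw [firstK_succ π (i+1) h, ← hc, Finset.erase_insert (self_not_mem_firstK π (i+1) h)]
      calc score A π i = inNbrs A S y := rfl
        _ ≤ inNbrs A S c := hif
        _ ≤ inNbrs A (firstK π (i+1)) c := inNbrs_mono A (Finset.erase_subset _ _) c
        _ = score A π (i+1) := by
            rw [score, hl, if_pos hif, hkey]
    · have : leader A π (i+1) = y := by rw [hl, if_neg hif]
      unfold score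
      rw [this]
      exact inNbrs_mono A
        (Finset.erase_subset_erase _ (firstK_mono π (by omega))) y
  · have : leader A π (i+1) = leader A π i := by rw [leader_succ, dif_neg h]
    unfold score
    rw [this]
    exact inNbrs_mono A
      (Finset.erase_subset_erase _ (firstK_mono π (by omega))) _

lemma score_mono : Monotone (score A π) :=
  monotone_nat_of_le_succ (score_mono_succ A π)

lemma score_le_winner (i : ℕ) (hi : i ≤ n) : score A π i ≤ inDeg A (winner A π) := by
  calc score A π i ≤ score A π n := score_mono A π hi
    _ ≤ inNbrs A Finset.univ (leader A π n) :=
        inNbrs_mono A (Finset.subset_univ _) _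
    _ = inDeg A (winner A π) := rfl

/-- Key pointwise bound: the number of in-neighbors of any vertex `v` that appear
strictly before `v` in `π` is at most the in-degree of the winner. -/
lemma before_le_winner (v : Fin (n+1)) :
    inNbrs A (firstK π ((π.symm v : ℕ))) v ≤ inDeg A (winner A π) := by
  by_cases h0 : (π.symm v : ℕ) = 0
  · rw [h0]
    have : firstK π 0 = ∅ := by
      ext u; simp [mem_firstK]
    rw [this]
    simp [inNbrs]
  · obtain ⟨j, htj⟩ := Nat.exists_eq_succ_of_ne_zero h0
    have hjn : j + 1 < n + 1 := by have := (π.symm v).isLt; omega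
    have hcv : π ⟨j+1, hjn⟩ = v := by
      have : π.symm v = ⟨j+1, hjn⟩ := Fin.ext (by simpa using htj)
      rw [← this, Equiv.apply_symm_apply]
    set y := leader A π j with hy
    set S := (firstK π (j+1)).erase y with hS
    have hl : leader A π (j+1) = if inNbrs A S y ≤ inNbrs A S v then v else y := by
      rw [leader_succ, dif_pos hjn, hcv]
    rw [htj]
    by_cases hif : inNbrs A S y ≤ inNbrs A S v
    · -- v becomes the leader; its score is exactly the quantity we bound
      have hkey : (firstK π (j+1+1)).erase v = firstK π (j+1) := by
        rw [firstK_succ π (j+1) hjn, hcv,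
          Finset.erase_insert (by rw [← hcv]; exact self_not_mem_firstK π (j+1) hjn)]
      have hscore : score A π (j+1) = inNbrs A (firstK π (j+1)) v := by
        unfold score
        rw [hl, if_pos hif, hkey]
      rw [← hscore]
      exact score_le_winner A π (j+1) (by omega)
    · -- v does not become the leader
      push_neg at hif
      have hsub : firstK π (j+1) ⊆ insert y S :=
        Finset.subset_insert_iff.mpr (Finset.Subset.refl _)
      have h1 : inNbrs A (firstK π (j+1)) v ≤ inNbrs A S v + 1 := by
        calc inNbrs A (firstK π (j+1)) v ≤ inNbrs A (insert y S) v :=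
              inNbrs_mono A hsub v
          _ ≤ inNbrs A S v + 1 := by
              unfold inNbrs
              rw [Finset.filter_insert]
              split
              · exact Finset.card_insert_le _ _
              · omega
      have h2 : inNbrs A S v + 1 ≤ inNbrs A S y := hif
      have h3 : inNbrs A S y = score A π j := rfl
      calc inNbrs A (firstK π (j+1)) v ≤ inNbrs A S y := le_trans h1 h2
        _ = score A π j := h3
        _ ≤ inDeg A (winner A π) := score_le_winner A π j (by omega)

/-- For `u ≠ v`, `u` precedes `v` in exactly half of all permutations. -/
lemma half_count {m : ℕ} (u v : Fin m) (huv : u ≠ v) :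
    2 * ∑ π : Equiv.Perm (Fin m),
        (if (π.symm u : ℕ) < (π.symm v : ℕ) then 1 else 0) = Nat.factorial m := by
  have hswap : (∑ π : Equiv.Perm (Fin m),
      (if (π.symm v : ℕ) < (π.symm u : ℕ) then (1:ℕ) else 0)) =
      ∑ π : Equiv.Perm (Fin m),
        (if (π.symm u : ℕ) < (π.symm v : ℕ) then (1:ℕ) else 0) := by
    apply Fintype.sum_equiv (Equiv.mulLeft (Equiv.swap u v))
    intro π
    have h1 : (Equiv.swap u v * π).symm u = π.symm v := by
      rw [Equiv.symm_apply_eq]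
      simp [Equiv.Perm.mul_apply]
    have h2 : (Equiv.swap u v * π).symm v = π.symm u := by
      rw [Equiv.symm_apply_eq]
      simp [Equiv.Perm.mul_apply]
    simp only [Equiv.coe_mulLeft, h1, h2]
  have hsum : ∀ π : Equiv.Perm (Fin m),
      ((if (π.symm u : ℕ) < (π.symm v : ℕ) then (1:ℕ) else 0) +
       (if (π.symm v : ℕ) < (π.symm u : ℕ) then (1:ℕ) else 0)) = 1 := by
    intro π
    have hne : (π.symm u : ℕ) ≠ (π.symm v : ℕ) := by
      intro h
      exact huv (π.symm.injective (Fin.ext h))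
    split_ifs <;> omega
  have := Finset.sum_congr rfl (fun π (_ : π ∈ Finset.univ) => hsum π)
  rw [Finset.sum_add_distrib] at this
  rw [two_mul]
  nth_rewrite 2 [← hswap]
  rw [this, Finset.sum_const, Finset.card_univ, Fintype.card_perm, Fintype.card_fin,
    smul_eq_mul, mul_one]

lemma sum_before (v : Fin (n+1)) :
    ∑ u ∈ Finset.univ.filter (fun u => A u v),
        (if (π.symm u : ℕ) < (π.symm v : ℕ) then (1:ℕ) else 0)
      = inNbrs A (firstK π ((π.symm v : ℕ))) v := by
  rw [← Finset.card_filter]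
  unfold inNbrs firstK
  rw [Finset.filter_comm]

end Aux

/-- For every loopless directed graph without multiple arcs, the expected
in-degree of the winner of the permutation mechanism under a uniformly random permutation
is at least `Δ⁻(G)/2`. -/
theorem permutation_mechanism_half_optimal (n : ℕ) (A : Fin (n+1) → Fin (n+1) → Bool)
    (hloopless : ∀ v, A v v = false) :
    (maxInDeg A : ℝ) / 2 ≤
      (∑ π : Equiv.Perm (Fin (n+1)), (inDeg A (winner A π) : ℝ)) /
        (Nat.factorial (n+1)) := by
  obtain ⟨v, -, hv⟩ := Finset.exists_mem_eq_sup Finset.univ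
    ⟨0, Finset.mem_univ 0⟩ (inDeg A)
  set N := Finset.univ.filter (fun u => A u v) with hN
  have hNcard : N.card = maxInDeg A := by rw [maxInDeg, hv]; rfl
  have hne : ∀ u ∈ N, u ≠ v := by
    intro u hu h
    subst h
    rw [hN, Finset.mem_filter] at hu
    rw [hloopless u] at hu
    simp at hu
  have key : maxInDeg A * Nat.factorial (n+1) ≤
      2 * ∑ π : Equiv.Perm (Fin (n+1)), inDeg A (winner A π) := by
    calc maxInDeg A * Nat.factorial (n+1)
        = ∑ _u ∈ N, Nat.factorial (n+1) := by
          rw [Finset.sum_const, hNcard, smul_eq_mul]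
      _ = ∑ u ∈ N, 2 * ∑ π : Equiv.Perm (Fin (n+1)),
            (if (π.symm u : ℕ) < (π.symm v : ℕ) then (1:ℕ) else 0) :=
          Finset.sum_congr rfl (fun u hu => (half_count u v (hne u hu)).symm)
      _ = 2 * ∑ u ∈ N, ∑ π : Equiv.Perm (Fin (n+1)),
            (if (π.symm u : ℕ) < (π.symm v : ℕ) then (1:ℕ) else 0) := by
          rw [Finset.mul_sum]
      _ = 2 * ∑ π : Equiv.Perm (Fin (n+1)), ∑ u ∈ N,
            (if (π.symm u : ℕ) < (π.symm v : ℕ) then (1:ℕ) else 0) := by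
          rw [Finset.sum_comm]
      _ = 2 * ∑ π : Equiv.Perm (Fin (n+1)),
            inNbrs A (firstK π ((π.symm v : ℕ))) v := by
          rw [Finset.sum_congr rfl (fun π _ => sum_before A π v)]
      _ ≤ 2 * ∑ π : Equiv.Perm (Fin (n+1)), inDeg A (winner A π) := by
          exact Nat.mul_le_mul_left 2
            (Finset.sum_le_sum (fun π _ => before_le_winner A π v))
  have hF : (0:ℝ) < (Nat.factorial (n+1) : ℝ) := by
    exact_mod_cast Nat.factorial_pos (n+1)
  rw [div_le_div_iff₀ two_pos hF]
  have hcast : (∑ π : Equiv.Perm (Fin (n+1)), (inDeg A (winner A π) : ℝ))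
      = ((∑ π : Equiv.Perm (Fin (n+1)), inDeg A (winner A π) : ℕ) : ℝ) := by
    push_cast; rfl
  rw [hcast]
  have : (maxInDeg A * Nat.factorial (n+1) : ℝ) ≤
      ((∑ π : Equiv.Perm (Fin (n+1)), inDeg A (winner A π) : ℕ) : ℝ) * 2 := by
    rw [mul_comm _ (2:ℝ)]
    exact_mod_cast key
  exact_mod_cast this
end

section
/- For every ε₂ with 0 < ε₂ < 1, there exists N₂ such that for all integers n, Δ with n ≥ Δ > N₂, at least (1 − ε₂)·n! of the permutations of [n] are (Δ, ε₂)-balanced. -/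
attribute [local instance] Classical.propDecidable

/-- A permutation `π` of `[n]` (modelled as `Fin n`) is `(Δ, ε)`-balanced if for every
`0 ≤ k ≤ n` we have `|[Δ] ∩ Π_k| ≥ (k/n − ε)·Δ`, where `Π_k` is the set of the first `k`
entries of `π` and `[Δ]` is the set of the first `Δ` vertices. -/
def IsBalanced (n Δ : ℕ) (ε : ℝ) (π : Equiv.Perm (Fin n)) : Prop :=
  ∀ k : ℕ, k ≤ n →
    ((k : ℝ) / n - ε) * Δ ≤
      ((Finset.univ.filter fun v : Fin n =>
          (v : ℕ) < Δ ∧ (π.symm v : ℕ) < k).card : ℝ)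

/-! For fixed `k`, the overlap `X = |[Δ] ∩ Π_k|` of a uniformly random permutation is
hypergeometric: counting the permutations with one or two prescribed values gives mean `kΔ/n`
and variance `Δk(n-Δ)(n-k)/(n²(n-1)) ≤ Δ`, so by Chebyshev at most a `4/(ε²Δ)` fraction of
permutations have `X < kΔ/n - εΔ/2`. As `X` is monotone in `k`, it suffices to control it on
a grid of at most `3/ε` values of `k` with gaps of at most `εn/2`; the union bound leaves at
most `12 n!/(ε³Δ) ≤ ε n!` unbalanced permutations once `Δ > 12/ε⁴`. -/

open Finset Equiv
open scoped Nat

section PermCounting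

variable {α : Type*} [Fintype α] [DecidableEq α]

theorem card_perm_apply_eq (j v : α) : #{σ : Perm α | σ j = v} = (Fintype.card α - 1)! := by
  have hfiber (w : α) : #{σ : Perm α | σ j = w} = #{σ : Perm α | σ j = v} :=
    card_equiv (Equiv.mulLeft (swap w v)) fun σ => by simp [swap_apply_eq_iff]
  have hsum : (Fintype.card α)! = Fintype.card α * #{σ : Perm α | σ j = v} := by
    rw [← Fintype.card_perm, ← card_univ,
      card_eq_sum_card_fiberwise (f := fun σ : Perm α => σ j) (t := univ) (by simp)]
    simp [hfiber]
  obtain ⟨m, hm⟩ := Nat.exists_eq_succ_of_ne_zero (Fintype.card_pos_iff.mpr ⟨j⟩).ne'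
  rw [hm, Nat.factorial_succ] at hsum
  simpa [hm] using (Nat.eq_of_mul_eq_mul_left m.succ_pos hsum).symm

theorem card_perm_apply_eq_and_apply_eq {j l v w : α} (hjl : j ≠ l) (hvw : v ≠ w) :
    #{σ : Perm α | σ j = v ∧ σ l = w} = (Fintype.card α - 2)! := by
  have hfiber (w' : α) (hw' : w' ≠ v) :
      #{σ : Perm α | σ j = v ∧ σ l = w'} = #{σ : Perm α | σ j = v ∧ σ l = w} :=
    card_equiv (Equiv.mulLeft (swap w' w)) fun σ => by
      simp [swap_apply_eq_iff, swap_apply_of_ne_of_ne hw'.symm hvw]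
  have hmaps : Set.MapsTo (fun σ : Perm α => σ l) ({σ | σ j = v} : Finset (Perm α))
      (univ.erase v) := by
    intro σ hσ
    simpa [← (mem_filter.mp (mem_coe.mp hσ)).2] using σ.injective.ne hjl.symm
  have hsum :
      (Fintype.card α - 1)! = (Fintype.card α - 1) * #{σ : Perm α | σ j = v ∧ σ l = w} := by
    rw [← card_perm_apply_eq j v, card_eq_sum_card_fiberwise hmaps,
      sum_congr rfl fun w' hw' => ?_, sum_const, card_erase_of_mem (mem_univ v), card_univ,
      smul_eq_mul]
    rw [filter_filter]
    exact hfiber w' (ne_of_mem_erase hw')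
  obtain ⟨m, hm⟩ : ∃ m, Fintype.card α = m + 2 :=
    ⟨Fintype.card α - 2, by have := Fintype.one_lt_card_iff.mpr ⟨j, l, hjl⟩; omega⟩
  rw [hm] at hsum
  simpa [hm, Nat.factorial_succ] using (Nat.eq_of_mul_eq_mul_left m.succ_pos hsum).symm

theorem card_perm_symm_apply_mem (v : α) (B : Finset α) :
    #{σ : Perm α | σ.symm v ∈ B} = #B * (Fintype.card α - 1)! := by
  rw [card_eq_sum_card_fiberwise (f := fun σ : Perm α => σ.symm v) (t := B) (by intro σ; simp),
    sum_congr rfl fun j _ => ?_, sum_const, smul_eq_mul]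
  rw [← card_perm_apply_eq j v, filter_filter]
  congr 1
  ext σ
  simp only [mem_filter, mem_univ, true_and, symm_apply_eq]
  constructor
  · rintro ⟨-, rfl⟩
    rfl
  · rintro rfl
    simp_all

theorem card_perm_symm_apply_mem_and_symm_apply_mem {v w : α} (hvw : v ≠ w) (B : Finset α) :
    #{σ : Perm α | σ.symm v ∈ B ∧ σ.symm w ∈ B} = #B.offDiag * (Fintype.card α - 2)! := by
  rw [card_eq_sum_card_fiberwise (f := fun σ : Perm α => (σ.symm v, σ.symm w)) (t := B.offDiag)
    (by intro σ; simp [hvw]), sum_congr rfl fun p hp => ?_, sum_const, smul_eq_mul]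
  obtain ⟨hp₁, hp₂, hp⟩ := mem_offDiag.mp hp
  rw [← card_perm_apply_eq_and_apply_eq hp hvw, filter_filter]
  congr 1
  ext σ
  simp only [mem_filter, mem_univ, true_and, Prod.ext_iff, symm_apply_eq]
  constructor
  · rintro ⟨-, rfl, rfl⟩
    simp
  · rintro ⟨rfl, rfl⟩
    simp [hp₁, hp₂]

variable (A B : Finset α)

theorem sum_card_filter_symm_apply_mem :
    ∑ σ : Perm α, #{v ∈ A | σ.symm v ∈ B} = #A * (#B * (Fintype.card α - 1)!) := by
  have := sum_card_bipartiteAbove_eq_sum_card_bipartiteBelow (s := univ) (t := A)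
    (r := fun (σ : Perm α) v => σ.symm v ∈ B)
  simp only [bipartiteAbove, bipartiteBelow] at this
  rw [this, sum_congr rfl fun v _ => card_perm_symm_apply_mem v B, sum_const, smul_eq_mul]

theorem sum_card_offDiag_filter_symm_apply_mem :
    ∑ σ : Perm α, #{v ∈ A | σ.symm v ∈ B}.offDiag
      = #A.offDiag * (#B.offDiag * (Fintype.card α - 2)!) := by
  have := sum_card_bipartiteAbove_eq_sum_card_bipartiteBelow (s := univ) (t := A.offDiag)
    (r := fun (σ : Perm α) p => σ.symm p.1 ∈ B ∧ σ.symm p.2 ∈ B)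
  simp only [bipartiteAbove, bipartiteBelow] at this
  convert this using 1
  · refine sum_congr rfl fun σ _ => congrArg card ?_
    ext p
    simp only [mem_offDiag, mem_filter]
    tauto
  · rw [sum_congr rfl fun p hp => card_perm_symm_apply_mem_and_symm_apply_mem
      (mem_offDiag.mp hp).2.2 B, sum_const, smul_eq_mul]

theorem Finset.cast_card_offDiag {R β : Type*} [NonAssocRing R] [DecidableEq β] (s : Finset β) :
    (#s.offDiag : R) = #s * #s - #s := by
  rw [offDiag_card, Nat.cast_sub (Nat.le_mul_self _), Nat.cast_mul]

theorem card_mul_sum_sq_card_filter_symm_apply_mem_sub (h : 2 ≤ Fintype.card α) :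
    (Fintype.card α : ℝ) *
        ∑ σ : Perm α, ((#{v ∈ A | σ.symm v ∈ B} : ℝ) - #A * #B / Fintype.card α) ^ 2
      = (Fintype.card α - 2)! * #A * #B * (Fintype.card α - #A) * (Fintype.card α - #B) := by
  have hsum := sum_card_filter_symm_apply_mem A B
  have hsum₂ := sum_card_offDiag_filter_symm_apply_mem A B
  obtain ⟨m, hm⟩ : ∃ m, Fintype.card α = m + 2 := ⟨Fintype.card α - 2, by omega⟩
  simp only [hm, Nat.add_sub_cancel, show m + 2 - 1 = m + 1 from rfl] at hsum hsum₂ ⊢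
  simp only [← Nat.cast_inj (R := ℝ), Nat.cast_sum, Nat.cast_mul, cast_card_offDiag,
    sum_sub_distrib, sub_eq_iff_eq_add, ← sq] at hsum hsum₂
  simp only [sub_sq, sum_add_distrib, sum_sub_distrib, ← sum_mul, ← mul_sum, sum_const,
    card_univ, Fintype.card_perm, hm]
  rw [nsmul_eq_mul, hsum₂, hsum]
  push_cast [Nat.factorial_succ]
  field_simp
  ring

theorem sum_sq_card_filter_symm_apply_mem_sub_le (h : 2 ≤ Fintype.card α) :
    ∑ σ : Perm α, ((#{v ∈ A | σ.symm v ∈ B} : ℝ) - #A * #B / Fintype.card α) ^ 2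
      ≤ #A * (Fintype.card α)! := by
  obtain ⟨m, hm⟩ : ∃ m, Fintype.card α = m + 2 := ⟨Fintype.card α - 2, by omega⟩
  have ha : (#A : ℝ) ≤ m + 2 := by exact_mod_cast hm ▸ card_le_univ A
  have hb : (#B : ℝ) ≤ m + 2 := by exact_mod_cast hm ▸ card_le_univ B
  have hkey : (#B : ℝ) * (m + 2 - #A) * (m + 2 - #B) ≤ (m + 2) * (m + 2) * (m + 1) := by
    rcases Nat.eq_zero_or_pos #B with hb₀ | hb₁
    · simp only [hb₀, CharP.cast_eq_zero, zero_mul]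
      positivity
    · have : (1 : ℝ) ≤ #B := by exact_mod_cast hb₁
      gcongr <;> linarith
  refine le_of_mul_le_mul_left ?_ (by positivity : (0 : ℝ) < Fintype.card α)
  rw [card_mul_sum_sq_card_filter_symm_apply_mem_sub A B h, hm]
  push_cast [Nat.factorial_succ]
  linear_combination mul_le_mul_of_nonneg_left hkey (by positivity : (0 : ℝ) ≤ #A * m !)

end PermCounting

theorem card_filter_lt_sub_mul_sq_le_sum_sq {ι : Type*} (s : Finset ι) (f : ι → ℝ) (μ : ℝ)
    {t : ℝ} (ht : 0 ≤ t) :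
    #{x ∈ s | f x < μ - t} * t ^ 2 ≤ ∑ x ∈ s, (f x - μ) ^ 2 := by
  calc #{x ∈ s | f x < μ - t} * t ^ 2 = ∑ _x ∈ s with f _x < μ - t, t ^ 2 := by
        rw [sum_const, nsmul_eq_mul]
    _ ≤ ∑ x ∈ s with f x < μ - t, (f x - μ) ^ 2 :=
        sum_le_sum fun x hx => by nlinarith [(mem_filter.mp hx).2]
    _ ≤ ∑ x ∈ s, (f x - μ) ^ 2 :=
        sum_le_sum_of_subset_of_nonneg (filter_subset _ _) fun _ _ _ => sq_nonneg _

theorem natCast_div_floor_add_one_le {x : ℝ} (hx : 0 < x) (n : ℕ) :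
    ((n / (⌊x⌋₊ + 1) : ℕ) : ℝ) ≤ n / x := by
  refine Nat.cast_div_le.trans (div_le_div_of_nonneg_left n.cast_nonneg hx ?_)
  exact_mod_cast (Nat.lt_floor_add_one x).le

/-- `|[Δ] ∩ Π_k|` in the notation of `IsBalanced`. -/
def prefixOverlap {n : ℕ} (Δ k : ℕ) (π : Perm (Fin n)) : ℕ :=
  #{v : Fin n | (v : ℕ) < Δ ∧ (π.symm v : ℕ) < k}

theorem isBalanced_iff {n Δ : ℕ} {ε : ℝ} {π : Perm (Fin n)} :
    IsBalanced n Δ ε π ↔ ∀ k ≤ n, ((k : ℝ) / n - ε) * Δ ≤ prefixOverlap Δ k π :=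
  Iff.rfl

theorem prefixOverlap_mono {n : ℕ} (Δ : ℕ) (π : Perm (Fin n)) :
    Monotone fun k => prefixOverlap Δ k π := fun _ _ hk =>
  card_le_card (monotone_filter_right _ fun _ _ hv => ⟨hv.1, hv.2.trans_le hk⟩)

theorem sum_sq_prefixOverlap_sub_le {n Δ k : ℕ} (hΔ : Δ ≤ n) (hk : k ≤ n) (hn : 2 ≤ n) :
    ∑ π : Perm (Fin n), ((prefixOverlap Δ k π : ℝ) - Δ * k / n) ^ 2 ≤ Δ * n ! := by
  have h := sum_sq_card_filter_symm_apply_mem_sub_le {v : Fin n | (v : ℕ) < Δ}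
    {j : Fin n | (j : ℕ) < k} (by simpa using hn)
  simp only [Fin.card_filter_val_lt, min_eq_right hΔ, min_eq_right hk, Fintype.card_fin] at h
  convert h using 4 with π
  simp [prefixOverlap, filter_filter]

theorem isBalanced_of_forall_grid {n Δ s : ℕ} {ε : ℝ} {π : Perm (Fin n)} (hn : 0 < n)
    (hs : 0 < s) (hsε : (s : ℝ) ≤ ε * n / 2 + 1)
    (hgrid : ∀ i ≤ n / s, (Δ : ℝ) * (s * i : ℕ) / n - ε * Δ / 2 ≤ prefixOverlap Δ (s * i) π) :
    IsBalanced n Δ ε π := by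
  refine isBalanced_iff.mpr fun k hk => ?_
  set j := s * (k / s)
  have hjk : j ≤ k := Nat.mul_div_le k s
  have hkj : (k : ℝ) ≤ j + ε * n / 2 := by
    have : k < j + s := by simpa [j, mul_add_one] using Nat.lt_mul_div_succ k hs
    have : (k : ℝ) + 1 ≤ j + s := by exact_mod_cast this
    linarith
  have hkn : (k : ℝ) / n ≤ j / n + ε / 2 := by
    rw [div_add' _ _ _ (by positivity), div_le_div_iff_of_pos_right (by positivity)]
    linarith
  calc ((k : ℝ) / n - ε) * Δ ≤ (j / n - ε / 2) * Δ :=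
        mul_le_mul_of_nonneg_right (by linarith) Δ.cast_nonneg
    _ = Δ * j / n - ε * Δ / 2 := by ring
    _ ≤ prefixOverlap Δ j π := hgrid _ (Nat.div_le_div_right hk)
    _ ≤ prefixOverlap Δ k π := by exact_mod_cast prefixOverlap_mono Δ π hjk

theorem card_filter_not_isBalanced_le {n Δ : ℕ} {ε : ℝ} (hε : 0 < ε) (hε₁ : ε ≤ 1)
    (hΔ : 0 < Δ) (hΔn : Δ ≤ n) (hn : 2 ≤ n) :
    (#{π : Perm (Fin n) | ¬IsBalanced n Δ ε π} : ℝ) ≤ 12 / (ε ^ 3 * Δ) * n ! := by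
  set s := ⌊ε * n / 2⌋₊ + 1
  set t := ε * Δ / 2
  let bad (i : ℕ) : Finset (Perm (Fin n)) :=
    {π | (prefixOverlap Δ (s * i) π : ℝ) < Δ * (s * i : ℕ) / n - t}
  have hcover : ({π | ¬IsBalanced n Δ ε π} : Finset (Perm (Fin n))) ⊆
      (range (n / s + 1)).biUnion bad := by
    intro π hπ
    simp only [mem_filter, mem_univ, true_and] at hπ
    simp only [mem_biUnion, mem_range, mem_filter, mem_univ, true_and, bad]
    contrapose! hπ
    have hs : (s : ℝ) ≤ ε * n / 2 + 1 := by
      push_cast [s]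
      linarith [Nat.floor_le (by positivity : 0 ≤ ε * n / 2)]
    exact isBalanced_of_forall_grid (by omega) (Nat.succ_pos _) hs fun i hi =>
      hπ i (Nat.lt_succ_of_le hi)
  have hbad (i : ℕ) (hi : i ∈ range (n / s + 1)) : (#(bad i) : ℝ) ≤ Δ * n ! / t ^ 2 := by
    have hsi : s * i ≤ n :=
      (Nat.mul_le_mul_left s (Nat.lt_succ_iff.mp (mem_range.mp hi))).trans (Nat.mul_div_le n s)
    rw [le_div_iff₀ (by positivity)]
    exact (card_filter_lt_sub_mul_sq_le_sum_sq _ _ _ (by positivity)).trans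
      (sum_sq_prefixOverlap_sub_le hΔn hsi hn)
  have hgrid : ((n / s + 1 : ℕ) : ℝ) ≤ 3 / ε := by
    have hdiv := natCast_div_floor_add_one_le (by positivity : 0 < ε * n / 2) n
    rw [show (n : ℝ) / (ε * n / 2) = 2 / ε by field_simp] at hdiv
    calc ((n / s + 1 : ℕ) : ℝ) ≤ 2 / ε + 1 / ε := by
          push_cast
          exact add_le_add hdiv (one_le_one_div hε hε₁)
      _ = 3 / ε := by ring
  calc (#{π : Perm (Fin n) | ¬IsBalanced n Δ ε π} : ℝ)
      ≤ ∑ i ∈ range (n / s + 1), (#(bad i) : ℝ) := by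
        exact_mod_cast (card_le_card hcover).trans card_biUnion_le
    _ ≤ ∑ i ∈ range (n / s + 1), Δ * n ! / t ^ 2 := sum_le_sum hbad
    _ = (n / s + 1 : ℕ) * (4 / (ε ^ 2 * Δ) * n !) := by
        rw [sum_const, card_range, nsmul_eq_mul, div_pow]
        field_simp
        ring
    _ ≤ 3 / ε * (4 / (ε ^ 2 * Δ) * n !) := by gcongr
    _ = 12 / (ε ^ 3 * Δ) * n ! := by field_simp; norm_num

/-- For every `0 < ε₂ < 1` there exists `N₂` such that for all
`n ≥ Δ > N₂`, at least `(1 − ε₂)·n!` of the permutations of `[n]` are `(Δ, ε₂)`-balanced. -/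
theorem most_permutations_balanced (ε₂ : ℝ) (h0 : 0 < ε₂) (h1 : ε₂ < 1) :
    ∃ N₂ : ℕ, ∀ n Δ : ℕ, N₂ < Δ → Δ ≤ n →
      (1 - ε₂) * (Nat.factorial n : ℝ) ≤
        ((Finset.univ.filter fun π : Equiv.Perm (Fin n) =>
            IsBalanced n Δ ε₂ π).card : ℝ) := by
  refine ⟨⌈12 / ε₂ ^ 4⌉₊, fun n Δ hN hΔn => ?_⟩
  have hΔ : 12 < ε₂ ^ 4 * Δ := by
    rw [← div_lt_iff₀' (by positivity)]
    exact Nat.lt_of_ceil_lt hN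
  have hΔ₂ : 2 ≤ Δ := by
    have : (1 : ℝ) < Δ := by nlinarith [pow_le_one₀ h0.le h1.le (n := 4)]
    exact_mod_cast this
  have hunbalanced : (#{π : Perm (Fin n) | ¬IsBalanced n Δ ε₂ π} : ℝ) ≤ ε₂ * n ! := by
    refine (card_filter_not_isBalanced_le h0 h1.le (by omega) hΔn (by omega)).trans ?_
    gcongr
    rw [div_le_iff₀ (by positivity)]
    linarith
  have hsplit : (#{π : Perm (Fin n) | IsBalanced n Δ ε₂ π} : ℝ)
      + #{π : Perm (Fin n) | ¬IsBalanced n Δ ε₂ π} = n ! := by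
    exact_mod_cast (card_filter_add_card_filter_not (s := univ) _).trans
      (by simp [Fintype.card_perm])
  linarith
end

section
/- Let 0 < ε ≤ 1/8, set ε̂ = ε²/4, and let Δ be a real number with Δ ≥ 144/ε̂⁴. Let V be a finite set, let D ⊆ V, and let R be the random subset of V consisting of all of D together with each element of V ∖ D included independently with probability 1 − ε. Let Z ⊆ V ∖ D with |Z| ≥ ε·Δ, and for each z ∈ Z let U_z ⊆ V ∖ {z} be a set with |U_z| ≥ (1 − 3ε)·Δ. Then with probability at least 1 − ε there exists z ∈ Z such that z ∉ R and |U_z ∩ R| ≥ (1 − 5ε)·Δ. -/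
/-!
Keep `k = ⌈2/ε²⌉` vertices of `Z`. All of them land in `R` with probability
`(1 - ε)^k ≤ ε/2`. For each of them cut `U_z` down to `⌈(1 - 3ε)Δ⌉` elements: the number of those
outside `D` that `R` misses has mean and variance at most `εΔ`, so by Chebyshev it reaches `2εΔ`
with probability at most `1/(εΔ)`. Outside these `k + 1` events, of total probability at most
`ε/2 + k/(εΔ) ≤ ε`, any kept `z ∉ R` keeps at least `(1 - 5ε)Δ` elements of `U_z` in `R`.
-/

open Finset

theorem Finset.card_le_card_inter_union_add {α : Type*} [DecidableEq α] {U T : Finset α}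
    (hT : T ⊆ U) (D S : Finset α) : T.card ≤ (U ∩ (D ∪ S)).card + ((T \ D) \ S).card := by
  refine (card_le_card fun x hx => ?_).trans (card_union_le _ _)
  by_cases hx' : x ∈ D ∪ S
  · exact mem_union_left _ (mem_inter.2 ⟨hT hx, hx'⟩)
  · simp_all

namespace RandomSubset

variable {α : Type*}

/-- Expectation over the random subset `S ⊆ Ω` that contains each element of `Ω` independently
with probability `p` and misses it with probability `q`; in the theorem `Ω = V \ D` and
`S = R \ D`. -/
def expect (Ω : Finset α) (p q : ℝ) (f : Finset α → ℝ) : ℝ :=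
  ∑ S ∈ Ω.powerset, p ^ S.card * q ^ (Ω.card - S.card) * f S

def prob (Ω : Finset α) (p q : ℝ) (E : Finset α → Prop) [DecidablePred E] : ℝ :=
  ∑ S ∈ Ω.powerset, if E S then p ^ S.card * q ^ (Ω.card - S.card) else 0

variable {Ω : Finset α} {p q : ℝ} {E F : Finset α → Prop} [DecidablePred E] [DecidablePred F]

theorem prob_eq_expect : prob Ω p q E = expect Ω p q (fun S => if E S then 1 else 0) := by
  simp only [prob, expect, mul_ite, mul_one, mul_zero]

theorem expect_add (f g : Finset α → ℝ) :
    expect Ω p q (fun S => f S + g S) = expect Ω p q f + expect Ω p q g := by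
  simp only [expect, mul_add, sum_add_distrib]

theorem expect_sub (f g : Finset α → ℝ) :
    expect Ω p q (fun S => f S - g S) = expect Ω p q f - expect Ω p q g := by
  simp only [expect, mul_sub, sum_sub_distrib]

theorem expect_const_mul (c : ℝ) (f : Finset α → ℝ) :
    expect Ω p q (fun S => c * f S) = c * expect Ω p q f := by
  simp only [expect, mul_sum, mul_left_comm]

theorem expect_sum {ι : Type*} (s : Finset ι) (f : ι → Finset α → ℝ) :
    expect Ω p q (fun S => ∑ i ∈ s, f i S) = ∑ i ∈ s, expect Ω p q (f i) := by
  simp only [expect, mul_sum]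
  exact sum_comm

theorem expect_const (hpq : p + q = 1) (c : ℝ) : expect Ω p q (fun _ => c) = c := by
  simp only [expect, ← sum_mul, sum_pow_mul_eq_add_pow, hpq, one_pow, one_mul]

theorem expect_mono (hp : 0 ≤ p) (hq : 0 ≤ q) {f g : Finset α → ℝ} (h : ∀ S ⊆ Ω, f S ≤ g S) :
    expect Ω p q f ≤ expect Ω p q g :=
  sum_le_sum fun S hS => by gcongr; exact h S (mem_powerset.1 hS)

theorem prob_congr (h : ∀ S, E S ↔ F S) : prob Ω p q E = prob Ω p q F :=
  sum_congr rfl fun S _ => if_congr (h S) rfl rfl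

theorem prob_mono (hp : 0 ≤ p) (hq : 0 ≤ q) (h : ∀ S ⊆ Ω, E S → F S) :
    prob Ω p q E ≤ prob Ω p q F := by
  refine sum_le_sum fun S hS => ?_
  split_ifs with hE hF hF
  · exact le_rfl
  · exact absurd (h S (mem_powerset.1 hS) hE) hF
  · positivity
  · exact le_rfl

theorem prob_eq_one_sub_prob_not (hpq : p + q = 1) :
    prob Ω p q E = 1 - prob Ω p q (fun S => ¬ E S) := by
  rw [prob_eq_expect, prob_eq_expect, eq_sub_iff_add_eq, ← expect_add]
  convert expect_const (Ω := Ω) hpq 1 using 2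
  ext S
  split_ifs <;> simp_all

theorem prob_or_le (hp : 0 ≤ p) (hq : 0 ≤ q) :
    prob Ω p q (fun S => E S ∨ F S) ≤ prob Ω p q E + prob Ω p q F := by
  rw [prob, prob, prob, ← sum_add_distrib]
  refine sum_le_sum fun S _ => ?_
  split_ifs <;> simp_all
  positivity

theorem prob_exists_le (hp : 0 ≤ p) (hq : 0 ≤ q) {ι : Type*} (s : Finset ι)
    (E : ι → Finset α → Prop) [∀ i, DecidablePred (E i)] :
    prob Ω p q (fun S => ∃ i ∈ s, E i S) ≤ ∑ i ∈ s, prob Ω p q (E i) := by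
  simp only [prob]
  rw [sum_comm]
  refine sum_le_sum fun S _ => ?_
  split_ifs with h
  · obtain ⟨i, hi, hE⟩ := h
    exact (if_pos hE).symm.le.trans
      (single_le_sum (f := fun j => if E j S then _ else 0) (fun j _ => by positivity) hi)
  · exact sum_nonneg fun j _ => by positivity

theorem prob_subset_and_disjoint [DecidableEq α] (hpq : p + q = 1) {A B : Finset α} (hA : A ⊆ Ω)
    (hB : B ⊆ Ω) (hAB : Disjoint A B) :
    prob Ω p q (fun S => A ⊆ S ∧ Disjoint B S) = p ^ A.card * q ^ B.card := by
  have key := prod_add (fun i => if i ∉ B then p else 0) (fun i => if i ∉ A then q else 0) Ω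
  have factor : ∀ i ∈ Ω, ((if i ∉ B then p else 0) + if i ∉ A then q else 0) =
      (if i ∈ A then p else 1) * (if i ∈ B then q else 1) := by
    intro i _
    by_cases hiA : i ∈ A <;> by_cases hiB : i ∈ B
    · exact absurd hiB (disjoint_left.1 hAB hiA)
    all_goals simp [hiA, hiB, hpq]
  rw [prod_congr rfl factor, prod_mul_distrib, prod_ite_mem, prod_ite_mem, prod_const, prod_const,
    inter_eq_right.2 hA, inter_eq_right.2 hB] at key
  rw [key, prob]
  refine sum_congr rfl fun S hS => ?_
  rw [prod_ite_zero, prod_ite_zero, prod_const, prod_const,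
    card_sdiff_of_subset (mem_powerset.1 hS), ite_zero_mul_ite_zero]
  have hsub : (∀ i ∈ Ω \ S, i ∉ A) ↔ A ⊆ S :=
    ⟨fun h i hiA => by_contra fun hiS => h i (mem_sdiff.2 ⟨hA hiA, hiS⟩) hiA,
      fun h i hi hiA => (mem_sdiff.1 hi).2 (h hiA)⟩
  refine if_congr ?_ rfl rfl
  rw [hsub, disjoint_right]
  exact and_comm

theorem prob_subset [DecidableEq α] (hpq : p + q = 1) {A : Finset α} (hA : A ⊆ Ω) :
    prob Ω p q (fun S => A ⊆ S) = p ^ A.card := by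
  simpa using prob_subset_and_disjoint hpq hA (empty_subset Ω) (disjoint_empty_right A)

theorem prob_not_mem_and_not_mem [DecidableEq α] (hpq : p + q = 1) {w w' : α} (hw : w ∈ Ω)
    (hw' : w' ∈ Ω) :
    prob Ω p q (fun S => w ∉ S ∧ w' ∉ S) = q ^ ({w, w'} : Finset α).card := by
  have h := prob_subset_and_disjoint hpq (empty_subset Ω)
    (insert_subset hw (singleton_subset_iff.2 hw')) (disjoint_empty_left {w, w'})
  rw [card_empty, pow_zero, one_mul] at h
  rw [← h]
  exact prob_congr fun S => by simp [disjoint_insert_left]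

theorem prob_not_mem [DecidableEq α] (hpq : p + q = 1) {w : α} (hw : w ∈ Ω) :
    prob Ω p q (fun S => w ∉ S) = q := by
  rw [prob_congr fun S => (and_self_iff (a := w ∉ S)).symm, prob_not_mem_and_not_mem hpq hw hw]
  simp

theorem expect_centered_indicator_mul [DecidableEq α] (hpq : p + q = 1) {w w' : α} (hw : w ∈ Ω)
    (hw' : w' ∈ Ω) :
    expect Ω p q (fun S => ((if w ∉ S then 1 else 0) - q) * ((if w' ∉ S then 1 else 0) - q)) =
      if w = w' then p * q else 0 := by
  have expand : ∀ S : Finset α,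
      ((if w ∉ S then 1 else 0) - q) * ((if w' ∉ S then 1 else 0) - q) =
        (if w ∉ S ∧ w' ∉ S then 1 else 0) - q * (if w ∉ S then 1 else 0) -
          q * (if w' ∉ S then 1 else 0) + q ^ 2 := by
    intro S
    split_ifs <;> simp_all <;> ring
  simp only [expand, expect_add, expect_sub, expect_const_mul, expect_const hpq, ← prob_eq_expect,
    prob_not_mem_and_not_mem hpq hw hw', prob_not_mem hpq hw, prob_not_mem hpq hw']
  split_ifs with h
  · subst h
    simp only [insert_eq_of_mem (mem_singleton_self w), card_singleton]
    rw [eq_sub_of_add_eq hpq]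
    ring
  · rw [card_pair h]
    ring

theorem expect_sq_card_sdiff_sub [DecidableEq α] (hpq : p + q = 1) {W : Finset α} (hW : W ⊆ Ω) :
    expect Ω p q (fun S => (((W \ S).card : ℝ) - q * W.card) ^ 2) = p * q * W.card := by
  have h : ∀ S, ((W \ S).card : ℝ) - q * W.card = ∑ w ∈ W, ((if w ∉ S then 1 else 0) - q) := by
    intro S
    rw [sdiff_eq_filter, card_filter, sum_sub_distrib]
    simp [mul_comm]
  simp_rw [h, sq, sum_mul_sum, expect_sum]
  rw [sum_congr rfl fun w hw => sum_congr rfl fun w' hw' =>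
    expect_centered_indicator_mul hpq (hW hw) (hW hw')]
  simp [sum_ite_eq]
  ring

theorem prob_le_expect_sq_div (hp : 0 ≤ p) (hq : 0 ≤ q) {t : ℝ} (ht : 0 < t) (f : Finset α → ℝ)
    (m : ℝ) :
    prob Ω p q (fun S => m + t ≤ f S) ≤ expect Ω p q (fun S => (f S - m) ^ 2) / t ^ 2 := by
  rw [prob_eq_expect, div_eq_inv_mul, ← expect_const_mul]
  refine expect_mono hp hq fun S _ => ?_
  split_ifs with h
  · rw [le_inv_mul_iff₀ (by positivity), mul_one]
    nlinarith
  · positivity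

theorem prob_card_sdiff_ge_le [DecidableEq α] (hp : 0 ≤ p) (hq : 0 ≤ q) (hpq : p + q = 1)
    {W : Finset α} (hW : W ⊆ Ω) {c : ℝ} (hc : q * W.card < c) :
    prob Ω p q (fun S => c ≤ ((W \ S).card : ℝ)) ≤ p * q * W.card / (c - q * W.card) ^ 2 := by
  have h := prob_le_expect_sq_div (Ω := Ω) hp hq (sub_pos.2 hc) (fun S => ((W \ S).card : ℝ))
    (q * W.card)
  rwa [expect_sq_card_sdiff_sub hpq hW, add_sub_cancel] at h

theorem prob_card_inter_union_lt_le [DecidableEq α] {q m t : ℝ} (hq0 : 0 ≤ q) (hq1 : q ≤ 1)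
    (hm : 0 ≤ m) (ht : 0 < t) (hmt : q * (m + 1) ≤ t) {U D : Finset α} (hUΩ : U \ D ⊆ Ω)
    (hU : m ≤ U.card) :
    prob Ω (1 - q) q (fun S => ((U ∩ (D ∪ S)).card : ℝ) < m - 2 * t) ≤ 1 / t := by
  -- Truncating `U` to `⌈m⌉` elements bounds the variance of the number of missed ones by `t`.
  obtain ⟨T, hTU, hTcard⟩ := exists_subset_card_eq (Nat.ceil_le.2 hU)
  have hmT : m ≤ T.card := hTcard ▸ Nat.le_ceil m
  have hWΩ : T \ D ⊆ Ω := (sdiff_subset_sdiff hTU le_rfl).trans hUΩ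
  have hW : ((T \ D).card : ℝ) ≤ m + 1 := by
    calc ((T \ D).card : ℝ) ≤ T.card := by exact_mod_cast card_le_card sdiff_subset
      _ ≤ m + 1 := by rw [hTcard]; exact (Nat.ceil_lt_add_one hm).le
  have hqW : q * (T \ D).card ≤ t := (mul_le_mul_of_nonneg_left hW hq0).trans hmt
  calc prob Ω (1 - q) q (fun S => ((U ∩ (D ∪ S)).card : ℝ) < m - 2 * t)
      ≤ prob Ω (1 - q) q (fun S => 2 * t ≤ (((T \ D) \ S).card : ℝ)) := by
        refine prob_mono (by linarith) hq0 fun S _ hS => ?_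
        have := card_le_card_inter_union_add hTU D S
        have : (T.card : ℝ) ≤ (U ∩ (D ∪ S)).card + ((T \ D) \ S).card := by exact_mod_cast this
        linarith
    _ ≤ (1 - q) * q * (T \ D).card / (2 * t - q * (T \ D).card) ^ 2 :=
        prob_card_sdiff_ge_le (by linarith) hq0 (by ring) hWΩ (by linarith)
    _ ≤ t / t ^ 2 := by
        refine div_le_div₀ ht.le ?_ (by positivity) ?_
        · calc (1 - q) * q * (T \ D).card ≤ q * (T \ D).card := by
                have : 0 ≤ q * (T \ D).card := by positivity
                nlinarith
            _ ≤ t := hqW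
        · exact pow_le_pow_left₀ ht.le (by linarith) 2
    _ = 1 / t := by field_simp

end RandomSubset

theorem one_sub_pow_mul_one_add_le_one {x : ℝ} (hx0 : 0 ≤ x) (hx1 : x ≤ 1) (n : ℕ) :
    (1 - x) ^ n * (1 + n * x) ≤ 1 :=
  calc (1 - x) ^ n * (1 + n * x) ≤ (1 - x) ^ n * (1 + x) ^ n := by
        gcongr
        exact one_add_mul_le_pow (by linarith) n
    _ = (1 - x ^ 2) ^ n := by rw [← mul_pow]; ring
    _ ≤ 1 := pow_le_one₀ (by nlinarith) (by nlinarith)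

theorem six_le_pow_four_mul {ε Δ : ℝ} (hε0 : 0 < ε) (hε1 : ε ≤ 1)
    (hΔ : 144 / (ε ^ 2 / 4) ^ 4 ≤ Δ) : 6 ≤ ε ^ 4 * Δ := by
  rw [div_le_iff₀ (by positivity)] at hΔ
  have : ε ^ 8 ≤ ε ^ 4 := pow_le_pow_of_le_one hε0.le hε1 (by norm_num)
  have hΔ0 : 0 ≤ Δ := by nlinarith [pow_pos hε0 8]
  nlinarith [mul_le_mul_of_nonneg_right this hΔ0]

theorem exists_sample_size {ε Δ : ℝ} (hε0 : 0 < ε) (hε1 : ε ≤ 1) (hΔ : 6 ≤ ε ^ 4 * Δ) :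
    ∃ k : ℕ, (k : ℝ) ≤ ε * Δ ∧ (1 - ε) ^ k + k / (ε * Δ) ≤ ε := by
  have hΔ0 : 0 < Δ := pos_of_mul_pos_right (by linarith : 0 < ε ^ 4 * Δ) (by positivity)
  refine ⟨⌈2 / ε ^ 2⌉₊, ?_⟩
  set k := ⌈2 / ε ^ 2⌉₊
  have hk_ge : 2 / ε ^ 2 ≤ k := Nat.le_ceil _
  have hk_le : (k : ℝ) * ε ^ 2 ≤ 3 := by
    have := Nat.ceil_lt_add_one (show 0 ≤ 2 / ε ^ 2 by positivity)
    rw [← le_div_iff₀ (by positivity)]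
    have : (1 : ℝ) ≤ 1 / ε ^ 2 := by rw [le_div_iff₀ (by positivity)]; nlinarith
    linarith [show 2 / ε ^ 2 + 1 / ε ^ 2 = 3 / ε ^ 2 by ring]
  have hε4 : ε ^ 4 ≤ ε := pow_le_of_le_one hε0.le hε1 (by norm_num)
  have hε3 : ε ^ 4 ≤ ε ^ 3 := pow_le_pow_of_le_one hε0.le hε1 (by norm_num)
  have hε2 : 0 < ε ^ 2 := by positivity
  have hpow : (1 - ε) ^ k ≤ ε / 2 := by
    have hkε : 2 / ε ≤ 1 + k * ε := by
      rw [div_le_iff₀ hε0]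
      rw [div_le_iff₀ hε2] at hk_ge
      nlinarith
    have := one_sub_pow_mul_one_add_le_one hε0.le hε1 k
    have := mul_le_mul_of_nonneg_left hkε (pow_nonneg (sub_nonneg.2 hε1) k)
    rw [le_div_iff₀ two_pos]
    rw [mul_div_assoc', div_le_iff₀ hε0] at this
    nlinarith
  have hfrac : (k : ℝ) / (ε * Δ) ≤ ε / 2 := by
    rw [div_le_iff₀ (by positivity)]
    nlinarith
  refine ⟨?_, by linarith⟩
  nlinarith

open RandomSubset in
theorem exists_unrevealed_high_degree_general {α : Type*} [DecidableEq α]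
    (ε Δ : ℝ) (hε0 : 0 < ε) (hε1 : ε ≤ 1 / 8) (hΔ : 144 / (ε ^ 2 / 4) ^ 4 ≤ Δ)
    (V D : Finset α)
    (Z : Finset α) (hZ : Z ⊆ V \ D) (hZcard : ε * Δ ≤ (Z.card : ℝ))
    (U : α → Finset α) (hU : ∀ z ∈ Z, U z ⊆ V.erase z)
    (hUcard : ∀ z ∈ Z, (1 - 3 * ε) * Δ ≤ ((U z).card : ℝ)) :
    1 - ε ≤
      ∑ S ∈ (V \ D).powerset,
        (if ∃ z ∈ Z, z ∉ D ∪ S ∧ (1 - 5 * ε) * Δ ≤ (((U z) ∩ (D ∪ S)).card : ℝ)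
         then (1 - ε) ^ S.card * ε ^ ((V \ D).card - S.card) else 0) := by
  have hΔε := six_le_pow_four_mul hε0 (by linarith) hΔ
  have hε4 : ε ^ 4 ≤ ε := pow_le_of_le_one hε0.le (by linarith) (by norm_num)
  have hΔ0 : 0 < Δ := pos_of_mul_pos_right (by linarith : 0 < ε ^ 4 * Δ) (by positivity)
  obtain ⟨k, hkΔ, hk⟩ := exists_sample_size hε0 (by linarith) hΔε
  obtain ⟨Z', hZ'Z, rfl⟩ :=
    exists_subset_card_eq (s := Z) (n := k) (by exact_mod_cast hkΔ.trans hZcard)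
  have hZ'Ω : Z' ⊆ V \ D := hZ'Z.trans hZ
  have hlarge : ∀ z ∈ Z', prob (V \ D) (1 - ε) ε
      (fun S => ((U z ∩ (D ∪ S)).card : ℝ) < (1 - 3 * ε) * Δ - 2 * (ε * Δ)) ≤ 1 / (ε * Δ) :=
    fun z hz => prob_card_inter_union_lt_le hε0.le (by linarith) (by nlinarith) (by positivity)
      (by nlinarith) (sdiff_subset_sdiff ((hU z (hZ'Z hz)).trans (erase_subset z V)) le_rfl)
      (hUcard z (hZ'Z hz))
  show 1 - ε ≤ prob (V \ D) (1 - ε) ε _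
  rw [prob_eq_one_sub_prob_not (by ring), sub_le_sub_iff_left]
  calc _ ≤ prob (V \ D) (1 - ε) ε (fun S => Z' ⊆ S ∨
          ∃ z ∈ Z', ((U z ∩ (D ∪ S)).card : ℝ) < (1 - 3 * ε) * Δ - 2 * (ε * Δ)) := by
        refine prob_mono (by linarith) hε0.le fun S _ hS => ?_
        rw [or_iff_not_imp_left, not_subset]
        rintro ⟨z, hz, hzS⟩
        refine ⟨z, hz, ?_⟩
        have hzD : z ∉ D := (mem_sdiff.1 (hZ'Ω hz)).2
        push Not at hS
        linarith [hS z (hZ'Z hz) (by simp [hzD, hzS])]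
    _ ≤ (1 - ε) ^ Z'.card + ∑ z ∈ Z', 1 / (ε * Δ) :=
        (prob_or_le (by linarith) hε0.le).trans (add_le_add (prob_subset (by ring) hZ'Ω).le
          ((prob_exists_le (by linarith) hε0.le _ _).trans (sum_le_sum hlarge)))
    _ ≤ ε := by simpa [div_eq_mul_inv] using hk

/-- Let `0 < ε ≤ 1/8`, `ε̂ = ε²/4`, and let `Δ ≥ 144/ε̂⁴` be real.
Let `R` be the random subset of the finite set `V` consisting of all of `D ⊆ V` together
with each element of `V ∖ D` included independently with probability `1 − ε`.  If
`Z ⊆ V ∖ D` has `|Z| ≥ ε·Δ` and each `z ∈ Z` comes with a set `U_z ⊆ V ∖ {z}` of size at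
least `(1 − 3ε)·Δ`, then with probability at least `1 − ε` there is `z ∈ Z` with `z ∉ R`
and `|U_z ∩ R| ≥ (1 − 5ε)·Δ`. -/
theorem exists_unrevealed_high_degree {α : Type*} [DecidableEq α]
    (ε Δ : ℝ) (hε0 : 0 < ε) (hε1 : ε ≤ 1 / 8) (hΔ : 144 / (ε ^ 2 / 4) ^ 4 ≤ Δ)
    (V D : Finset α) (hD : D ⊆ V)
    (Z : Finset α) (hZ : Z ⊆ V \ D) (hZcard : ε * Δ ≤ (Z.card : ℝ))
    (U : α → Finset α) (hU : ∀ z ∈ Z, U z ⊆ V.erase z)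
    (hUcard : ∀ z ∈ Z, (1 - 3 * ε) * Δ ≤ ((U z).card : ℝ)) :
    1 - ε ≤
      ∑ S ∈ (V \ D).powerset,
        (if ∃ z ∈ Z, z ∉ D ∪ S ∧ (1 - 5 * ε) * Δ ≤ (((U z) ∩ (D ∪ S)).card : ℝ)
         then (1 - ε) ^ S.card * ε ^ ((V \ D).card - S.card) else 0) :=
  exists_unrevealed_high_degree_general ε Δ hε0 hε1 hΔ V D Z hZ hZcard U hU hUcard
end

section
/- The permutation mechanism is impartial: let G and G' be loopless directed graphs without multiple arcs on the same vertex set [n], and let v be a vertex such that every vertex u ≠ v has the same out-neighborhood in G as in G'. Then the number of permutations π of [n] for which v is the winner of the permutation mechanism applied to G equals the number of permutations π for which v is the winner applied to G'; equivalently, the probability that v wins under a uniformly random permutation is the same in G and G'. -/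
/-- The permutation mechanism is impartial: if two loopless directed
graphs without multiple arcs on the same vertex set agree on the out-neighborhood of every
vertex other than `v`, then the number of permutations for which `v` wins is the same in
both graphs. -/
theorem permutation_mechanism_impartial (n : ℕ) (A A' : Fin (n+1) → Fin (n+1) → Bool)
    (hloopless : ∀ v, A v v = false) (hloopless' : ∀ v, A' v v = false)
    (v : Fin (n+1)) (hagree : ∀ u, u ≠ v → ∀ w, A u w = A' u w) :
    (Finset.univ.filter fun π : Equiv.Perm (Fin (n+1)) => winner A π = v).card =
      (Finset.univ.filter fun π : Equiv.Perm (Fin (n+1)) => winner A' π = v).card := by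
  have hcount : ∀ (S : Finset (Fin (n+1))) (w : Fin (n+1)), v ∉ S →
      inNbrs A S w = inNbrs A' S w := by
    intro S w hv
    unfold inNbrs
    congr 1
    apply Finset.filter_congr
    intro u hu
    have huv : u ≠ v := fun h => hv (h ▸ hu)
    rw [hagree u huv w]
  have key : ∀ π : Equiv.Perm (Fin (n+1)), winner A π = v ↔ winner A' π = v := by
    intro π
    have main : ∀ i, leader A π i = leader A' π i ∨
        (leader A π i ≠ v ∧ leader A' π i ≠ v ∧ (π.symm v : ℕ) ≤ i) := by
      intro i
      induction i with
      | zero => left; rfl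
      | succ i ih =>
        by_cases h : i + 1 < n + 1
        · have hA : leader A π (i+1) =
              (if inNbrs A ((firstK π (i+1)).erase (leader A π i)) (leader A π i) ≤
                  inNbrs A ((firstK π (i+1)).erase (leader A π i)) (π ⟨i+1, h⟩)
                then π ⟨i+1, h⟩ else leader A π i) := by
            simp only [leader, dif_pos h]
          have hA' : leader A' π (i+1) =
              (if inNbrs A' ((firstK π (i+1)).erase (leader A' π i)) (leader A' π i) ≤
                  inNbrs A' ((firstK π (i+1)).erase (leader A' π i)) (π ⟨i+1, h⟩)
                then π ⟨i+1, h⟩ else leader A' π i) := by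
            simp only [leader, dif_pos h]
          rcases ih with heq | ⟨hy, hy', hpos⟩
          · set y := leader A π i with hydef
            set S := (firstK π (i+1)).erase y with hSdef
            by_cases hvS : v ∈ S
            · -- right disjunct
              right
              have hvy : v ≠ y := (Finset.ne_of_mem_erase hvS)
              have hvfirst : (π.symm v : ℕ) < i + 1 := by
                have := Finset.mem_of_mem_erase hvS
                simpa [firstK] using this
              have hcv : π ⟨i+1, h⟩ ≠ v := by
                intro hc
                have : π.symm v = ⟨i+1, h⟩ := by rw [← hc]; simp
                rw [this] at hvfirst
                simp at hvfirst
              refine ⟨?_, ?_, by omega⟩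
              · rw [hA]
                split
                · exact hcv
                · exact fun hh => hvy hh.symm
              · rw [hA', ← heq]
                split
                · exact hcv
                · exact fun hh => hvy hh.symm
            · -- counts equal → leaders equal
              left
              rw [hA, hA', ← heq]
              rw [hcount S y hvS, hcount S (π ⟨i+1, h⟩) hvS]
          · right
            have hcv : π ⟨i+1, h⟩ ≠ v := by
              intro hc
              have : π.symm v = ⟨i+1, h⟩ := by rw [← hc]; simp
              have : (π.symm v : ℕ) = i + 1 := by rw [this]
              omega
            refine ⟨?_, ?_, by omega⟩
            · rw [hA]; split
              · exact hcv
              · exact hy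
            · rw [hA']; split
              · exact hcv
              · exact hy'
        · have hA : leader A π (i+1) = leader A π i := by
            simp only [leader, dif_neg h]
          have hA' : leader A' π (i+1) = leader A' π i := by
            simp only [leader, dif_neg h]
          rw [hA, hA']
          rcases ih with heq | ⟨hy, hy', hpos⟩
          · exact Or.inl heq
          · exact Or.inr ⟨hy, hy', by omega⟩
    rcases main n with heq | ⟨hy, hy', _⟩
    · unfold winner; rw [heq]
    · unfold winner; exact ⟨fun hh => absurd hh hy, fun hh => absurd hh hy'⟩
  congr 1
  apply Finset.filter_congr
  intro π _
  simpa using key π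
end
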